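/- For every real quaternion q = a + v with a > 0 and v ≠ 0, ∑_{j=0}^∞ C(q,j) = 2^q and ∑_{j=0}^∞ (-1)^j C(q,j) = 0, where C(q,j) = q(q-1)⋯(q-j+1)/j! and 2^q := 2^a(cos(|v| log 2) + (v/|v|) sin(|v| log 2)). -/

import Mathlib

/-!
Write `q = a + |v| I` with `I = v / |v|`, so that `I² = -1`. Then `x + iy ↦ x + y I` is a
continuous `ℝ`-algebra embedding `ℂ → ℍ` sending `z = a + i|v|` to `q`, `C(z,j)` to `C(q,j)` and
`2^z` to `2^q`, so both identities are images of the complex binomial series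
`∑ C(z,j) w^j = (1 + w)^z` at `w = ±1`. For `Re z > 0` the series `∑ |C(z,j)|` converges by
Raabe's test, since `|C(z,j+1)| / |C(z,j)| = |z - j| / (j + 1) ≤ 1 - (1 + Re z / 2) / (j + 1)`
for large `j`; Abel's theorem then extends the identity from `|w| < 1` to `|w| = 1`, where
`(1 + w)^z` is continuous.
-/

open scoped Quaternion

/-- The quaternionic binomial coefficient `C(q,j) = q(q-1)⋯(q-j+1)/j!`. -/
noncomputable def qbinom (q : ℍ[ℝ]) (j : ℕ) : ℍ[ℝ] :=
  ((j.factorial : ℝ))⁻¹ • ((List.range j).map (fun k => q - (k : ℍ[ℝ]))).prod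

/-- The quaternionic power `z^q` for `z > 0` real. -/
noncomputable def qpow (z : ℝ) (q : ℍ[ℝ]) : ℍ[ℝ] :=
  (z ^ q.re : ℝ) •
    (((Real.cos (‖q.im‖ * Real.log z) : ℝ) : ℍ[ℝ]) +
      (Real.sin (‖q.im‖ * Real.log z) / ‖q.im‖) • q.im)

open Finset Filter Topology

theorem summable_of_raabe {u : ℕ → ℝ} {s : ℝ} (hs : 1 < s) (hu : ∀ n, 0 ≤ u n) (N : ℕ)
    (h : ∀ n ≥ N, (n + 1) * u (n + 1) ≤ (n + 1 - s) * u n) : Summable u := by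
  -- The hypothesis says `(s - 1) u n ≤ n u n - (n + 1) u (n + 1)`, so partial sums telescope.
  have telescope : ∀ m, (s - 1) * ∑ i ∈ range m, u (i + N) + (m + N) * u (m + N) ≤ N * u N := by
    intro m
    induction m with
    | zero => simp
    | succ m ih =>
      have := h (m + N) (by omega)
      push_cast [sum_range_succ, add_right_comm _ 1] at this ⊢
      linarith
  refine (summable_nat_add_iff N).mp <| summable_of_sum_range_le (c := N * u N / (s - 1))
    (fun n ↦ hu _) fun m ↦ ?_
  rw [le_div_iff₀ (by linarith), mul_comm]
  have := mul_nonneg (by positivity : (0 : ℝ) ≤ m + N) (hu (m + N))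
  linarith [telescope m]

theorem Ring.choose_eq_inv_factorial_mul_prod {K : Type*} [Field K] [CharZero K] (a : K) (n : ℕ) :
    Ring.choose a n = (n.factorial : K)⁻¹ * ∏ k ∈ range n, (a - k) := by
  rw [Ring.choose_eq_smul, ← descPochhammer_eval_eq_prod_range, smul_eq_mul,
    ← descPochhammer_map (Int.castRingHom K), Polynomial.eval_map, ← algebraMap_int_eq,
    ← Polynomial.aeval_def, Polynomial.aeval_eq_smeval]

theorem Ring.choose_succ_mul {K : Type*} [Field K] [CharZero K] (a : K) (n : ℕ) :
    Ring.choose a (n + 1) * (n + 1) = Ring.choose a n * (a - n) := by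
  simp only [Ring.choose_eq_inv_factorial_mul_prod, prod_range_succ, Nat.factorial_succ]
  push_cast
  field_simp

theorem Complex.summable_norm_choose {a : ℂ} (ha : 0 < a.re) :
    Summable fun n ↦ ‖Ring.choose a n‖ := by
  have hfactor : ∀ᶠ n : ℕ in atTop, ‖a - n‖ ≤ n - a.re / 2 := by
    filter_upwards [(tendsto_natCast_atTop_atTop (R := ℝ)).eventually_ge_atTop
      (a.re + a.im ^ 2 / a.re)] with n hn
    have him : a.im ^ 2 ≤ (n - a.re) * a.re := (div_le_iff₀ ha).mp (by linarith)
    rw [← sq_le_sq₀ (norm_nonneg _) (by nlinarith [sq_nonneg a.im]), Complex.sq_norm,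
      Complex.normSq_apply]
    simp only [Complex.sub_re, Complex.natCast_re, Complex.sub_im, Complex.natCast_im]
    nlinarith
  obtain ⟨N, hN⟩ := eventually_atTop.mp hfactor
  refine summable_of_raabe (s := 1 + a.re / 2) (by linarith) (fun n ↦ norm_nonneg _) N
    fun n hn ↦ ?_
  calc (n + 1) * ‖Ring.choose a (n + 1)‖ = ‖Ring.choose a n‖ * ‖a - n‖ := by
        rw [← norm_mul, ← Ring.choose_succ_mul, norm_mul, mul_comm]
        norm_cast
    _ ≤ (n + 1 - (1 + a.re / 2)) * ‖Ring.choose a n‖ := by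
        rw [mul_comm]; gcongr; linarith [hN n hn]

theorem Complex.hasSum_of_tendsto_powerSeries {c : ℕ → ℂ} (hc : Summable c) {f : ℝ → ℂ} {l : ℂ}
    (hf : ∀ x ∈ Set.Ioo (0 : ℝ) 1, HasSum (fun n ↦ c n * x ^ n) (f x))
    (hl : Tendsto f (𝓝[<] 1) (𝓝 l)) : HasSum c l := by
  have habel := Complex.tendsto_tsum_powerSeries_nhdsWithin_lt hc.hasSum.tendsto_sum_nat
  rw [tendsto_map'_iff] at habel
  have hEq : (fun z : ℂ ↦ ∑' n, c n * z ^ n) ∘ Complex.ofReal =ᶠ[𝓝[<] 1] f := by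
    filter_upwards [Ioo_mem_nhdsLT (show (0 : ℝ) < 1 by norm_num)] with x hx
    exact (hf x hx).tsum_eq
  rw [← tendsto_nhds_unique (habel.congr' hEq) hl]
  exact hc.hasSum

theorem Complex.hasSum_choose_mul_pow (a : ℂ) {x : ℂ} (hx : ‖x‖ < 1) :
    HasSum (fun n ↦ Ring.choose a n * x ^ n) ((1 + x) ^ a) := by
  have := one_add_cpow_hasFPowerSeriesOnBall_zero (a := a) |>.hasSum
    (y := x) (by simpa [← ofReal_norm, ENNReal.ofReal_lt_one] using hx)
  simpa [binomialSeries, FormalMultilinearSeries.ofScalars_apply_eq, mul_comm] using this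

theorem Complex.hasSum_choose_mul_pow_of_norm_eq_one {a : ℂ} (ha : 0 < a.re) {w : ℂ}
    (hw : ‖w‖ = 1) : HasSum (fun n ↦ Ring.choose a n * w ^ n) ((1 + w) ^ a) := by
  have hsum : Summable fun n ↦ Ring.choose a n * w ^ n :=
    ((Complex.summable_norm_choose ha).congr fun n ↦ by simp [hw]).of_norm
  refine Complex.hasSum_of_tendsto_powerSeries hsum (f := fun x : ℝ ↦ (1 + x * w) ^ a)
    (fun x hx ↦ ?_) ?_
  · have hxw : ‖(x : ℂ) * w‖ < 1 := by
      rw [norm_mul, hw, mul_one, Complex.norm_real, Real.norm_eq_abs, abs_lt]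
      exact ⟨by linarith [hx.1], hx.2⟩
    convert Complex.hasSum_choose_mul_pow a hxw using 2 with n
    ring
  · have hre : 0 ≤ (1 + w).re := by
      have := abs_le.mp (hw ▸ Complex.abs_re_le_norm w)
      simp only [Complex.add_re, Complex.one_re]
      linarith
    have hcont : ContinuousAt (fun x : ℝ ↦ (1 + x * w) ^ a) 1 :=
      (continuousAt_cpow_const_of_re_pos (by simpa using Or.inl hre) ha).comp (by fun_prop)
    simpa using hcont.tendsto.mono_left nhdsWithin_le_nhds

theorem qbinom_map (φ : ℂ →ₐ[ℝ] ℍ[ℝ]) (z : ℂ) (j : ℕ) :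
    qbinom (φ z) j = φ (Ring.choose z j) := by
  have hprod : ∏ k ∈ range j, (z - k) = ((List.range j).map (fun k : ℕ ↦ z - k)).prod := by
    simp [Finset.prod_eq_multiset_prod, Multiset.range]
  rw [Ring.choose_eq_inv_factorial_mul_prod, hprod, ← Complex.ofReal_natCast, ← Complex.ofReal_inv,
    ← Complex.real_smul, map_smul, map_list_prod, List.map_map, qbinom]
  -- `qbinom` coerces `List.range j` to a list of quaternions, which elaborates to a `flatMap`.
  simp [← List.map_eq_flatMap, Function.comp_def]

namespace Quaternion

theorem inv_norm_im_smul_im_mul_self {q : ℍ[ℝ]} (hq : q.im ≠ 0) :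
    (‖q.im‖⁻¹ • q.im) * (‖q.im‖⁻¹ • q.im) = -1 := by
  rw [smul_mul_smul_comm, ← pow_two q.im, im_sq, normSq_eq_norm_mul_self, ← coe_neg, smul_coe,
    ← coe_one, ← coe_neg]
  congr 1
  field_simp

/-- The slice `ℝ + ℝ I`, `I = q.im / ‖q.im‖`, of `ℍ` containing `q`, as the image of `ℂ`. -/
noncomputable def sliceEmbedding (q : ℍ[ℝ]) (hq : q.im ≠ 0) : ℂ →ₐ[ℝ] ℍ[ℝ] :=
  Complex.liftAux _ (inv_norm_im_smul_im_mul_self hq)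

theorem sliceEmbedding_apply {q : ℍ[ℝ]} (hq : q.im ≠ 0) (w : ℂ) :
    sliceEmbedding q hq w = w.re + (w.im / ‖q.im‖) • q.im := by
  rw [sliceEmbedding, Complex.liftAux_apply, smul_smul, div_eq_mul_inv]
  rfl

theorem sliceEmbedding_mk {q : ℍ[ℝ]} (hq : q.im ≠ 0) :
    sliceEmbedding q hq ⟨q.re, ‖q.im‖⟩ = q := by
  rw [sliceEmbedding_apply, div_self (norm_ne_zero_iff.mpr hq), one_smul, re_add_im]

theorem qpow_eq_sliceEmbedding_cpow {q : ℍ[ℝ]} (hq : q.im ≠ 0) {x : ℝ} (hx : 0 < x) :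
    qpow x q = sliceEmbedding q hq ((x : ℂ) ^ (⟨q.re, ‖q.im‖⟩ : ℂ)) := by
  rw [sliceEmbedding_apply, Complex.cpow_def_of_ne_zero (by exact_mod_cast hx.ne'),
    ← Complex.ofReal_log hx.le, Complex.exp_re, Complex.exp_im, qpow, Real.rpow_def_of_pos hx]
  simp only [Complex.re_ofReal_mul, Complex.im_ofReal_mul]
  rw [smul_add, smul_coe, smul_smul, mul_comm (Real.log x) ‖q.im‖, mul_div_assoc]

end Quaternion

/-- `∑_j C(q,j) = 2^q` and `∑_j (-1)^j C(q,j) = 0` for a real quaternion `q = a + v`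
with `a > 0`, `v ≠ 0`. -/
theorem qbinom_sums (q : ℍ[ℝ]) (ha : 0 < q.re) (hv : q.im ≠ 0) :
    HasSum (fun j : ℕ => qbinom q j) (qpow 2 q) ∧
      HasSum (fun j : ℕ => ((-1 : ℝ) ^ j) • qbinom q j) 0 := by
  set φ := Quaternion.sliceEmbedding q hv
  set z : ℂ := ⟨q.re, ‖q.im‖⟩
  have hφ : Continuous φ := φ.toLinearMap.continuous_of_finiteDimensional
  have hterm (j : ℕ) : qbinom q j = φ (Ring.choose z j) := by
    rw [← qbinom_map, Quaternion.sliceEmbedding_mk]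
  constructor
  · have h :=
      (Complex.hasSum_choose_mul_pow_of_norm_eq_one (a := z) (w := 1) ha (by simp)).map φ hφ
    rw [Quaternion.qpow_eq_sliceEmbedding_cpow hv two_pos]
    simpa [hterm, Function.comp_def, one_add_one_eq_two] using h
  · have h :=
      (Complex.hasSum_choose_mul_pow_of_norm_eq_one (a := z) (w := -1) ha (by simp)).map φ hφ
    rw [add_neg_cancel, Complex.zero_cpow (ne_of_apply_ne Complex.re ha.ne'), map_zero] at h
    convert h using 2 with j
    rw [hterm, ← map_smul, Complex.real_smul, mul_comm]
    push_cast
    rfl
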